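/- arXiv:2208.04796 — 3 statements merged into one kernel-verified Lean document; each statement's English description precedes it below -/
import Mathlib

section
/- Convolution of normal and exponential tails, normal-dominated case: let X be standard normal and E standard exponential, independent; let (η_N) and (x_N) be sequences with η_N > 0, x_N → ∞, and x_N/η_N → ∞, and let μ > 0. If (x_N − μη_N²)/(√2·η_N) → ∞ as N→∞, then P(η_N·X + E/μ > x_N) is asymptotically equivalent, as N→∞, to (η_N/(√(2π)·x_N))·exp(−x_N²/(2η_N²)) + exp((μ/2)·(μη_N² − 2x_N)). -/
open MeasureTheory ProbabilityTheory Filter Real Set Topology Asymptotics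

noncomputable section

def erf (x : ℝ) : ℝ := (2 / Real.sqrt π) * ∫ t in (0 : ℝ)..x, Real.exp (-t ^ 2)

/-!
Conditioning on `X`, the exponential tail of `E` gives
`ℙ(ηX + E/μ > x) = ℙ(X > x/η) + 𝔼[e^{-μ(x - ηX)}; X ≤ x/η]`, and exponential tilting of the
Gaussian density turns the second term into `e^{(μ/2)(μη² - 2x)} Φ((x - μη²)/η)`. By l'Hôpital,
`ℙ(X > y) ~ φ(y)/y` (Mills' ratio), which at `y = x/η` is the first summand of the claim; the
hypothesis on `(x - μη²)/η` makes `Φ((x - μη²)/η) → 1`. Both terms being nonnegative, their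
equivalences add up.
-/

open scoped NNReal

namespace ProbabilityTheory

lemma expMeasure_Ioi_of_nonneg {r a : ℝ} (hr : 0 < r) (ha : 0 ≤ a) :
    expMeasure r (Ioi a) = ENNReal.ofReal (rexp (-(r * a))) := by
  have := isProbabilityMeasure_expMeasure hr
  rw [← compl_Iic, prob_compl_eq_one_sub measurableSet_Iic, ← ofReal_cdf, cdf_expMeasure_eq hr,
    if_pos ha, ← ENNReal.ofReal_one, ← ENNReal.ofReal_sub _ (sub_nonneg.2 ?_), sub_sub_cancel]
  exact exp_le_one_iff.2 (by nlinarith)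

lemma expMeasure_Ioi_of_nonpos {r a : ℝ} (hr : 0 < r) (ha : a ≤ 0) : expMeasure r (Ioi a) = 1 := by
  have := isProbabilityMeasure_expMeasure hr
  refine le_antisymm prob_le_one ?_
  calc 1 = expMeasure r (Ioi 0) := by simp [expMeasure_Ioi_of_nonneg hr le_rfl]
    _ ≤ expMeasure r (Ioi a) := measure_mono (Ioi_subset_Ioi ha)

lemma exp_mul_mul_gaussianPDFReal (m : ℝ) (v : ℝ≥0) (t s : ℝ) :
    rexp (t * s) * gaussianPDFReal m v s
      = rexp (m * t + v * t ^ 2 / 2) * gaussianPDFReal (m + v * t) v s := by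
  rcases eq_or_ne v 0 with rfl | hv
  · simp [gaussianPDFReal_zero_var]
  unfold gaussianPDFReal
  rw [mul_left_comm, ← exp_add, mul_left_comm, ← exp_add]
  congr 2
  field_simp
  ring

lemma hasDerivAt_gaussianPDFReal (m : ℝ) (v : ℝ≥0) (y : ℝ) :
    HasDerivAt (gaussianPDFReal m v) (-((y - m) / v) * gaussianPDFReal m v y) y := by
  have hexp : HasDerivAt (fun y ↦ -(y - m) ^ 2 / (2 * v)) (-((y - m) / v)) y := by
    refine ((((hasDerivAt_id y).sub_const m).pow 2).neg.div_const (2 * (v : ℝ))).congr_deriv ?_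
    simp only [id]; ring
  unfold gaussianPDFReal
  exact (hexp.exp.const_mul (√(2 * π * v))⁻¹).congr_deriv (by ring)

lemma continuous_gaussianPDFReal (m : ℝ) (v : ℝ≥0) : Continuous (gaussianPDFReal m v) :=
  continuous_iff_continuousAt.2 fun y ↦ (hasDerivAt_gaussianPDFReal m v y).continuousAt

lemma setLIntegral_exp_mul_gaussianReal (m : ℝ) {v : ℝ≥0} (hv : v ≠ 0) (t : ℝ) {A : Set ℝ}
    (hA : MeasurableSet A) :
    ∫⁻ s in A, ENNReal.ofReal (rexp (t * s)) ∂gaussianReal m v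
      = ENNReal.ofReal (rexp (m * t + v * t ^ 2 / 2)) * gaussianReal (m + v * t) v A := by
  rw [gaussianReal_of_var_ne_zero _ hv, restrict_withDensity hA,
    lintegral_withDensity_eq_lintegral_mul _ (measurable_gaussianPDF _ _) (by fun_prop),
    gaussianReal_apply _ hv, ← lintegral_const_mul _ (measurable_gaussianPDF _ _)]
  refine setLIntegral_congr_fun hA fun s _ ↦ ?_
  simp only [Pi.mul_apply, gaussianPDF]
  rw [← ENNReal.ofReal_mul (gaussianPDFReal_nonneg _ _ _), ← ENNReal.ofReal_mul (exp_nonneg _),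
    mul_comm, exp_mul_mul_gaussianPDFReal]

lemma gaussianReal_Iic_eq_centered (m : ℝ) (v : ℝ≥0) (b : ℝ) :
    gaussianReal m v (Iic b) = gaussianReal 0 v (Iic (b - m)) := by
  rw [← zero_add m, ← gaussianReal_map_add_const, Measure.map_apply (measurable_add_const _)
    measurableSet_Iic, zero_add]
  congr 1
  ext s
  simp [le_sub_iff_add_le]

lemma hasDerivAt_gaussianReal_real_Ioi (m : ℝ) {v : ℝ≥0} (hv : v ≠ 0) (y : ℝ) :
    HasDerivAt (fun y ↦ (gaussianReal m v).real (Ioi y)) (-gaussianPDFReal m v y) y := by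
  have hint := integrable_gaussianPDFReal m v
  have htail : ∀ y, (gaussianReal m v).real (Ioi y)
      = (∫ x in Ioi 0, gaussianPDFReal m v x) - ∫ x in 0..y, gaussianPDFReal m v x := by
    intro y
    rw [measureReal_def, gaussianReal_apply_eq_integral _ hv, ENNReal.toReal_ofReal
      (setIntegral_nonneg measurableSet_Ioi fun x _ ↦ gaussianPDFReal_nonneg _ _ _),
      ← intervalIntegral.integral_Ioi_sub_Ioi' hint.integrableOn hint.integrableOn, sub_sub_cancel]
  simp only [htail]
  exact (intervalIntegral.integral_hasDerivAt_right hint.intervalIntegrable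
    ((continuous_gaussianPDFReal m v).stronglyMeasurableAtFilter _ _)
    (continuous_gaussianPDFReal m v).continuousAt).const_sub _

lemma tendsto_gaussianReal_real_Ioi_atTop (m : ℝ) (v : ℝ≥0) :
    Tendsto (fun y ↦ (gaussianReal m v).real (Ioi y)) atTop (𝓝 0) := by
  have h := (tendsto_cdf_atTop (μ := gaussianReal m v)).const_sub 1
  rw [sub_self] at h
  refine h.congr fun y ↦ ?_
  rw [cdf_eq_real, ← probReal_compl_eq_one_sub measurableSet_Iic, compl_Iic]

lemma isEquivalent_gaussianReal_real_Ioi :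
    (fun y ↦ (gaussianReal 0 1).real (Ioi y)) ~[atTop] fun y ↦ gaussianPDFReal 0 1 y / y := by
  have hφ (y : ℝ) : 0 < gaussianPDFReal 0 1 y := gaussianPDFReal_pos 0 1 y one_ne_zero
  refine (isEquivalent_iff_tendsto_one ?_).2 ?_
  · filter_upwards [eventually_gt_atTop 0] with y hy using (div_pos (hφ y) hy).ne'
  refine HasDerivAt.lhopital_zero_atTop (f' := fun y ↦ -gaussianPDFReal 0 1 y)
    (g' := fun y ↦ -((1 + (y ^ 2)⁻¹) * gaussianPDFReal 0 1 y))
    (.of_forall (hasDerivAt_gaussianReal_real_Ioi 0 one_ne_zero)) ?_ ?_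
    (tendsto_gaussianReal_real_Ioi_atTop 0 1) ?_ ?_
  · filter_upwards [eventually_ne_atTop 0] with y hy
    refine ((hasDerivAt_gaussianPDFReal 0 1 y).div (hasDerivAt_id y) hy).congr_deriv ?_
    simp only [id, NNReal.coe_one]
    field_simp
    ring
  · exact .of_forall fun y ↦ neg_ne_zero.2 (mul_pos (by positivity) (hφ y)).ne'
  · have hexp : Tendsto (fun y : ℝ ↦ -(y - 0) ^ 2 / (2 * ((1 : ℝ≥0) : ℝ))) atTop atBot := by
      refine (tendsto_neg_atTop_atBot.comp
        ((tendsto_pow_atTop two_ne_zero).atTop_div_const two_pos)).congr fun y ↦ ?_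
      simp [neg_div]
    exact ((tendsto_exp_atBot.comp hexp).const_mul _).div_atTop tendsto_id
  · have h : Tendsto (fun y : ℝ ↦ (1 + (y ^ 2)⁻¹)⁻¹) atTop (𝓝 1) := by
      have h0 := (tendsto_inv_atTop_zero.comp (tendsto_pow_atTop (α := ℝ) two_ne_zero)).const_add 1
      simpa using h0.inv₀ (by norm_num)
    refine h.congr fun y ↦ ?_
    field_simp [(hφ y).ne']

lemma prod_gaussianReal_expMeasure_setOf_gt {η μ : ℝ} (hη : 0 < η) (hμ : 0 < μ) (x : ℝ) :
    ((gaussianReal 0 1).prod (expMeasure 1)) {p : ℝ × ℝ | η * p.1 + p.2 / μ > x}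
      = gaussianReal 0 1 (Ioi (x / η))
        + ENNReal.ofReal (rexp (μ / 2 * (μ * η ^ 2 - 2 * x)))
          * gaussianReal 0 1 (Iic ((x - μ * η ^ 2) / η)) := by
  have := isProbabilityMeasure_expMeasure one_pos
  have hS : MeasurableSet {p : ℝ × ℝ | η * p.1 + p.2 / μ > x} :=
    measurableSet_lt measurable_const (by fun_prop)
  have hslice (s : ℝ) :
      Prod.mk s ⁻¹' {p : ℝ × ℝ | η * p.1 + p.2 / μ > x} = Ioi ((x - η * s) * μ) := by
    ext e
    simp only [mem_preimage, mem_ofPred_eq, mem_Ioi, gt_iff_lt]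
    rw [← lt_div_iff₀ hμ, sub_lt_iff_lt_add']
  rw [Measure.prod_apply hS, ← lintegral_add_compl _ (measurableSet_Iic (a := x / η)), compl_Iic,
    add_comm]
  simp only [hslice]
  congr 1
  · rw [← setLIntegral_one]
    refine setLIntegral_congr_fun measurableSet_Ioi fun s hs ↦ expMeasure_Ioi_of_nonpos one_pos ?_
    have := (div_lt_iff₀' hη).1 hs
    nlinarith
  · have hexp : ∀ s ∈ Iic (x / η), expMeasure 1 (Ioi ((x - η * s) * μ))
        = ENNReal.ofReal (rexp (-(μ * x))) * ENNReal.ofReal (rexp (μ * η * s)) := by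
      intro s hs
      have := (le_div_iff₀' hη).1 hs
      rw [expMeasure_Ioi_of_nonneg one_pos (by nlinarith), ← ENNReal.ofReal_mul (exp_nonneg _),
        ← exp_add]
      ring_nf
    rw [setLIntegral_congr_fun measurableSet_Iic hexp, lintegral_const_mul _ (by fun_prop),
      setLIntegral_exp_mul_gaussianReal 0 one_ne_zero _ measurableSet_Iic, gaussianReal_Iic_eq_centered,
      ← mul_assoc, ← ENNReal.ofReal_mul (exp_nonneg _), ← exp_add]
    congr 4
    · push_cast; ring
    · field_simp; push_cast; ring

lemma measureReal_gaussian_mul_add_exp_div_gt {Ω : Type*} [MeasurableSpace Ω] {P : Measure Ω} {X E : Ω → ℝ}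
    (hX : P.map X = gaussianReal 0 1) (hE : P.map E = expMeasure 1) (hXE : IndepFun X E P)
    {η μ : ℝ} (hη : 0 < η) (hμ : 0 < μ) (x : ℝ) :
    P.real {ω | η * X ω + E ω / μ > x}
      = (gaussianReal 0 1).real (Ioi (x / η))
        + rexp (μ / 2 * (μ * η ^ 2 - 2 * x)) * cdf (gaussianReal 0 1) ((x - μ * η ^ 2) / η) := by
  have := isProbabilityMeasure_expMeasure one_pos
  have hXm : AEMeasurable X P := aemeasurable_of_map_neZero (by rw [hX]; infer_instance)
  have hEm : AEMeasurable E P := aemeasurable_of_map_neZero (by rw [hE]; infer_instance)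
  have hlaw : P.map (fun ω ↦ (X ω, E ω)) = (gaussianReal 0 1).prod (expMeasure 1) := by
    rw [← hX, ← hE]
    exact (indepFun_iff_map_prod_eq_prod_map_map' hXm hEm (by rw [hX]; infer_instance)
      (by rw [hE]; infer_instance)).1 hXE
  have hS : MeasurableSet {p : ℝ × ℝ | η * p.1 + p.2 / μ > x} :=
    measurableSet_lt measurable_const (by fun_prop)
  change (P ((fun ω ↦ (X ω, E ω)) ⁻¹' {p : ℝ × ℝ | η * p.1 + p.2 / μ > x})).toReal = _
  rw [← Measure.map_apply_of_aemeasurable (hXm.prodMk hEm) hS, hlaw,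
    prod_gaussianReal_expMeasure_setOf_gt hη hμ, ENNReal.toReal_add (measure_ne_top _ _)
      (ENNReal.mul_ne_top ENNReal.ofReal_ne_top (measure_ne_top _ _)),
    ENNReal.toReal_mul, ENNReal.toReal_ofReal (exp_nonneg _), cdf_eq_real, measureReal_def,
    measureReal_def]

end ProbabilityTheory

namespace Asymptotics

lemma IsEquivalent.add_add_of_eventually_nonneg {α : Type*} {l : Filter α} {u v t w : α → ℝ}
    (hv : ∀ᶠ a in l, 0 ≤ v a) (hw : ∀ᶠ a in l, 0 ≤ w a) (huv : u ~[l] v) (htw : t ~[l] w) :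
    u + t ~[l] v + w := by
  have habs {f : α → ℝ} (hf : ∀ᶠ a in l, 0 ≤ f a) : (fun a ↦ |f a|) =ᶠ[l] f :=
    hf.mono fun _ ↦ abs_of_nonneg
  exact ((huv.congr_right (habs hv).symm).add_add_of_nonneg (fun _ ↦ abs_nonneg _)
    (fun _ ↦ abs_nonneg _) (htw.congr_right (habs hw).symm)).congr_right ((habs hv).add (habs hw))

end Asymptotics

theorem convolution_normal_exponential_normal_dominated_general
    {Ω : Type*} [MeasureSpace Ω]
    (X E : Ω → ℝ)
    (hX : Measure.map X (ℙ : Measure Ω) = gaussianReal 0 1)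
    (hE : Measure.map E (ℙ : Measure Ω) = expMeasure 1)
    (hXE : IndepFun X E (ℙ : Measure Ω))
    (η x : ℕ → ℝ) (hη : ∀ N, 0 < η N)
    (hxη : Tendsto (fun N => x N / η N) atTop atTop)
    (μ : ℝ) (hμ : 0 < μ)
    (hc : Tendsto (fun N => (x N - μ * (η N) ^ 2) / (Real.sqrt 2 * η N)) atTop atTop) :
    (fun N : ℕ => (ℙ {ω | η N * X ω + E ω / μ > x N}).toReal) ~[atTop]
      (fun N : ℕ =>
        η N * Real.exp (-(x N) ^ 2 / (2 * (η N) ^ 2)) / (Real.sqrt (2 * π) * x N)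
          + Real.exp (μ / 2 * (μ * (η N) ^ 2 - 2 * x N))) := by
  have hz : Tendsto (fun N ↦ (x N - μ * η N ^ 2) / η N) atTop atTop := by
    refine (hc.const_mul_atTop (sqrt_pos.2 two_pos)).congr fun N ↦ ?_
    field_simp [(hη N).ne']
  have htail : (fun N ↦ (gaussianReal 0 1).real (Ioi (x N / η N))) ~[atTop]
      fun N ↦ η N * rexp (-(x N) ^ 2 / (2 * η N ^ 2)) / (√(2 * π) * x N) := by
    refine (isEquivalent_gaussianReal_real_Ioi.comp_tendsto hxη).congr_right (.of_forall fun N ↦ ?_)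
    simp only [Function.comp_apply, gaussianPDFReal, NNReal.coe_one, mul_one, sub_zero]
    field_simp
  have htilted : (fun N ↦ rexp (μ / 2 * (μ * η N ^ 2 - 2 * x N))
        * cdf (gaussianReal 0 1) ((x N - μ * η N ^ 2) / η N)) ~[atTop]
      fun N ↦ rexp (μ / 2 * (μ * η N ^ 2 - 2 * x N)) := by
    have hcdf : (fun N ↦ cdf (gaussianReal 0 1) ((x N - μ * η N ^ 2) / η N)) ~[atTop]
        Function.const ℕ (1 : ℝ) :=
      (isEquivalent_const_iff_tendsto one_ne_zero).2 ((tendsto_cdf_atTop _).comp hz)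
    simpa only [Pi.mul_def, Function.const_apply, mul_one] using IsEquivalent.refl.mul hcdf
  refine (htail.add_add_of_eventually_nonneg ?_ (.of_forall fun N ↦ (exp_pos _).le)
    htilted).congr_left (.of_forall fun N ↦
      (measureReal_gaussian_mul_add_exp_div_gt hX hE hXE (hη N) hμ (x N)).symm)
  filter_upwards [hxη.eventually_gt_atTop 0] with N hN
  have hxN : 0 < x N := (div_pos_iff_of_pos_right (hη N)).1 hN
  have := hη N
  positivity

/-- **Convolution of normal and exponential tails, normal-dominated case.** If
`(x_N - μ η_N²)/(√2 η_N) → ∞`, then `ℙ(η_N X + E/μ > x_N)` is asymptotically equivalent to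
`η_N e^{-x_N²/(2η_N²)}/(√(2π) x_N) + e^{(μ/2)(μη_N² - 2x_N)}`. -/
theorem convolution_normal_exponential_normal_dominated
    {Ω : Type*} [MeasureSpace Ω] [IsProbabilityMeasure (ℙ : Measure Ω)]
    (X E : Ω → ℝ)
    (hX : Measure.map X (ℙ : Measure Ω) = gaussianReal 0 1)
    (hE : Measure.map E (ℙ : Measure Ω) = expMeasure 1)
    (hXE : IndepFun X E (ℙ : Measure Ω))
    (η x : ℕ → ℝ) (hη : ∀ N, 0 < η N)
    (hx : Tendsto x atTop atTop)
    (hxη : Tendsto (fun N => x N / η N) atTop atTop)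
    (μ : ℝ) (hμ : 0 < μ)
    (hc : Tendsto (fun N => (x N - μ * (η N) ^ 2) / (Real.sqrt 2 * η N)) atTop atTop) :
    (fun N : ℕ => (ℙ {ω | η N * X ω + E ω / μ > x N}).toReal) ~[atTop]
      (fun N : ℕ =>
        η N * Real.exp (-(x N) ^ 2 / (2 * (η N) ^ 2)) / (Real.sqrt (2 * π) * x N)
          + Real.exp (μ / 2 * (μ * (η N) ^ 2 - 2 * x N))) :=
  convolution_normal_exponential_normal_dominated_general X E hX hE hXE η x hη hxη μ hμ hc

end
end

section
/- Exact convolution identity: let X be standard normal and E standard exponential, independent, and let η > 0, μ > 0, x ∈ ℝ. Then P(η·X + E/μ > x) = P(η·X > x) + (1/2)·exp((μ/2)·(μη² − 2x))·(erf((x − μη²)/(√2·η)) + 1); equivalently, ∫_{−∞}^{x/η} P(E/μ > x − ηz)·e^{−z²/2}/√(2π) dz = (1/2)·exp((μ/2)·(μη² − 2x))·(erf((x − μη²)/(√2·η)) + 1). -/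
open MeasureTheory ProbabilityTheory Filter Real Set Topology Asymptotics

noncomputable section

/-!
Conditioning on `X = z`, the event `ηX + E/μ > x` has probability `min 1 (e^{-μ(x - ηz)})`.
Above `z = x/η` this is `1` and integrates to `ℙ(ηX > x)`; below it, `e^{μηz}` tilts the standard
Gaussian density into that of `𝒩(μη, 1)` at the cost of the factor `e^{μ²η²/2}`, leaving the
Gaussian CDF `(erf(·/√2) + 1)/2` at `x/η - μη`.
-/

open scoped NNReal

lemma integral_Iic_exp_neg_sq (u : ℝ) :
    ∫ t in Iic u, exp (-t ^ 2) = √π / 2 * (erf u + 1) := by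
  have hint : Integrable fun t : ℝ => exp (-t ^ 2) := by
    simpa using integrable_exp_neg_mul_sq one_pos
  have hneg : ∫ t in Iic 0, exp (-t ^ 2) = √π / 2 := by
    have h := integral_comp_neg_Iic 0 fun t => exp (-t ^ 2)
    simp only [even_two, Even.neg_pow, neg_zero] at h
    simpa [h] using integral_gaussian_Ioi 1
  have hsplit := intervalIntegral.integral_Iic_sub_Iic hint.integrableOn hint.integrableOn
    (a := 0) (b := u)
  rw [hneg] at hsplit
  rw [erf, ← hsplit]
  field_simp
  ring

namespace ProbabilityTheory

variable {m : ℝ} {v : ℝ≥0}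

lemma gaussianReal_real_apply (hv : v ≠ 0) (s : Set ℝ) :
    (gaussianReal m v).real s = ∫ x in s, gaussianPDFReal m v x := by
  rw [measureReal_def, gaussianReal_apply_eq_integral _ hv,
    ENNReal.toReal_ofReal (integral_nonneg fun x => gaussianPDFReal_nonneg m v x)]

lemma setIntegral_gaussianReal_eq_setIntegral_mul (hv : v ≠ 0) (f : ℝ → ℝ) {s : Set ℝ}
    (hs : MeasurableSet s) :
    ∫ x in s, f x ∂gaussianReal m v = ∫ x in s, gaussianPDFReal m v x * f x := by
  rw [gaussianReal_of_var_ne_zero _ hv, setIntegral_withDensity_eq_setIntegral_toReal_smul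
    (measurable_gaussianPDF m v) (ae_of_all _ fun _ => gaussianPDF_lt_top) f hs]
  simp [toReal_gaussianPDF]

lemma gaussianPDFReal_zero_one (z : ℝ) :
    gaussianPDFReal 0 1 z = exp (-z ^ 2 / 2) / √(2 * π) := by
  simp [gaussianPDFReal, div_eq_inv_mul]

lemma gaussianReal_real_Iic (hv : v ≠ 0) (a : ℝ) :
    (gaussianReal m v).real (Iic a) = (erf ((a - m) / √(2 * v)) + 1) / 2 := by
  set c := √(2 * v)
  have hc : 0 < c := by positivity
  -- variance `1/2` is the normalisation whose density is `e^{-t²}/√π`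
  have hstd : (gaussianReal m v).map (fun t => (t - m) / c) = gaussianReal 0 (1 / 2) := by
    have hcomp : (fun t => (t - m) / c) = (· / c) ∘ (· - m) := rfl
    rw [hcomp, ← Measure.map_map (by fun_prop) (by fun_prop), gaussianReal_map_sub_const,
      gaussianReal_map_div_const, sub_self, zero_div]
    congr 1
    ext
    simp only [NNReal.coe_div, NNReal.coe_mk, c, sq_sqrt (by positivity : (0 : ℝ) ≤ 2 * v)]
    field_simp
    norm_num
  have hpre : (fun t => (t - m) / c) ⁻¹' Iic ((a - m) / c) = Iic a := by
    ext t; simp [div_le_div_iff_of_pos_right hc]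
  rw [← hpre, ← map_measureReal_apply (by fun_prop) measurableSet_Iic, hstd,
    gaussianReal_real_apply (by norm_num)]
  have hpdf : ∀ t, gaussianPDFReal 0 (1 / 2) t = (√π)⁻¹ * exp (-t ^ 2) := by
    intro t
    simp [gaussianPDFReal]
    field_simp
  simp_rw [hpdf]
  rw [integral_const_mul, integral_Iic_exp_neg_sq]
  field_simp

lemma setIntegral_exp_mul_gaussianReal (hv : v ≠ 0) (t : ℝ) {s : Set ℝ} (hs : MeasurableSet s) :
    ∫ z in s, exp (t * z) ∂gaussianReal m v
      = exp (t * m + v * t ^ 2 / 2) * (gaussianReal (m + v * t) v).real s := by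
  rw [setIntegral_gaussianReal_eq_setIntegral_mul hv _ hs, gaussianReal_real_apply hv,
    ← integral_const_mul]
  congr 1 with z
  have hv' : (v : ℝ) ≠ 0 := by exact_mod_cast hv
  simp only [gaussianPDFReal]
  rw [mul_assoc, ← exp_add, mul_left_comm, ← exp_add]
  congr 2
  field_simp
  ring

lemma setIntegral_Iic_exp_mul_gaussianReal (hv : v ≠ 0) (t b : ℝ) :
    ∫ z in Iic b, exp (t * z) ∂gaussianReal m v
      = exp (t * m + v * t ^ 2 / 2) * (erf ((b - m - v * t) / √(2 * v)) + 1) / 2 := by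
  rw [setIntegral_exp_mul_gaussianReal hv t measurableSet_Iic, gaussianReal_real_Iic hv,
    sub_sub]
  ring

section StandardGaussian

variable {η μ : ℝ}

lemma setIntegral_Iic_min_one_exp_gaussianReal (hη : 0 < η) (hμ : 0 ≤ μ) (x : ℝ) :
    ∫ z in Iic (x / η), min 1 (exp (-(μ * (x - η * z)))) ∂gaussianReal 0 1
      = 1 / 2 * exp (μ / 2 * (μ * η ^ 2 - 2 * x)) * (erf ((x - μ * η ^ 2) / (√2 * η)) + 1) := by
  have hmin : ∀ z ∈ Iic (x / η),
      min 1 (exp (-(μ * (x - η * z)))) = exp (-(μ * x)) * exp (μ * η * z) := by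
    intro z hz
    have : η * z ≤ x := by rw [mem_Iic, le_div_iff₀ hη] at hz; linarith
    rw [min_eq_right (exp_le_one_iff.mpr (by nlinarith)), ← exp_add]
    ring_nf
  rw [setIntegral_congr_fun measurableSet_Iic hmin, integral_const_mul,
    setIntegral_Iic_exp_mul_gaussianReal one_ne_zero]
  have harg : (x / η - 0 - ((1 : ℝ≥0) : ℝ) * (μ * η)) / √(2 * ((1 : ℝ≥0) : ℝ))
      = (x - μ * η ^ 2) / (√2 * η) := by
    push_cast
    field_simp
    ring
  rw [harg, mul_div_assoc', ← mul_assoc, ← exp_add]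
  push_cast
  ring_nf

lemma integral_min_one_exp_gaussianReal (hη : 0 < η) (hμ : 0 ≤ μ) (x : ℝ) :
    ∫ z, min 1 (exp (-(μ * (x - η * z)))) ∂gaussianReal 0 1
      = (gaussianReal 0 1).real (Ioi (x / η))
        + 1 / 2 * exp (μ / 2 * (μ * η ^ 2 - 2 * x)) * (erf ((x - μ * η ^ 2) / (√2 * η)) + 1) := by
  have hint : Integrable (fun z => min 1 (exp (-(μ * (x - η * z))))) (gaussianReal 0 1) := by
    refine Integrable.of_bound (by fun_prop) 1 (ae_of_all _ fun z => ?_)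
    rw [Real.norm_of_nonneg (le_min zero_le_one (exp_nonneg _))]
    exact min_le_left _ _
  have hmin : ∀ z ∈ Ioi (x / η), min 1 (exp (-(μ * (x - η * z)))) = 1 := by
    intro z hz
    have : x < η * z := by rw [mem_Ioi, div_lt_iff₀ hη] at hz; linarith
    exact min_eq_left (one_le_exp (by nlinarith))
  rw [← integral_add_compl measurableSet_Iic hint, compl_Iic,
    setIntegral_congr_fun measurableSet_Ioi hmin, setIntegral_const, smul_eq_mul, mul_one,
    setIntegral_Iic_min_one_exp_gaussianReal hη hμ, add_comm]

end StandardGaussian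

lemma expMeasure_real_Ioi {r : ℝ} (hr : 0 < r) (t : ℝ) :
    (expMeasure r).real (Ioi t) = min 1 (exp (-(r * t))) := by
  have := isProbabilityMeasure_expMeasure hr
  rw [← compl_Iic, probReal_compl_eq_one_sub measurableSet_Iic, ← cdf_eq_real,
    cdf_expMeasure_eq hr]
  split_ifs with ht
  · rw [min_eq_right (exp_le_one_iff.mpr (by nlinarith))]
    ring
  · rw [min_eq_left (one_le_exp (by nlinarith))]
    ring

lemma IndepFun.measureReal_preimage_eq_integral {Ω α β : Type*} [MeasurableSpace Ω]
    [MeasurableSpace α] [MeasurableSpace β] {P : Measure Ω} [IsFiniteMeasure P] {X : Ω → α}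
    {Y : Ω → β} (hXY : IndepFun X Y P) (hX : AEMeasurable X P) (hY : AEMeasurable Y P)
    {S : Set (α × β)} (hS : MeasurableSet S) :
    P.real ((fun ω => (X ω, Y ω)) ⁻¹' S) = ∫ a, (P.map Y).real (Prod.mk a ⁻¹' S) ∂P.map X := by
  rw [← map_measureReal_apply_of_aemeasurable (hX.prodMk hY) hS,
    (indepFun_iff_map_prod_eq_prod_map_map hX hY).mp hXY, measureReal_def,
    Measure.prod_apply hS, ← integral_toReal (measurable_measure_prodMk_left hS).aemeasurable
      (ae_of_all _ fun _ => measure_lt_top _ _)]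
  rfl

section ExponentialNoise

variable {Ω : Type*} [MeasurableSpace Ω] {P : Measure Ω} {X E : Ω → ℝ} {r μ : ℝ}

lemma measureReal_div_gt_of_map_eq_expMeasure (hEm : AEMeasurable E P)
    (hE : P.map E = expMeasure r) (hr : 0 < r) (hμ : 0 < μ) (s : ℝ) :
    P.real {ω | E ω / μ > s} = min 1 (exp (-(r * (μ * s)))) := by
  have hset : {ω | E ω / μ > s} = E ⁻¹' Ioi (μ * s) := by
    ext ω
    simp [lt_div_iff₀ hμ, mul_comm]
  rw [hset, ← map_measureReal_apply_of_aemeasurable hEm measurableSet_Ioi, hE,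
    expMeasure_real_Ioi hr]

lemma IndepFun.measureReal_mul_add_div_gt [IsFiniteMeasure P] (hXE : IndepFun X E P)
    (hXm : AEMeasurable X P) (hEm : AEMeasurable E P) (hE : P.map E = expMeasure r) (hr : 0 < r)
    (hμ : 0 < μ) (η x : ℝ) :
    P.real {ω | η * X ω + E ω / μ > x}
      = ∫ z, min 1 (exp (-(r * (μ * (x - η * z))))) ∂P.map X := by
  have hS : MeasurableSet {p : ℝ × ℝ | η * p.1 + p.2 / μ > x} :=
    measurableSet_lt (by fun_prop) (by fun_prop)
  have hslice : ∀ z,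
      Prod.mk z ⁻¹' {p : ℝ × ℝ | η * p.1 + p.2 / μ > x} = Ioi (μ * (x - η * z)) := by
    intro z
    ext e
    simp only [mem_preimage, mem_ofPred_eq, mem_Ioi, gt_iff_lt]
    rw [← sub_lt_iff_lt_add', lt_div_iff₀ hμ, mul_comm]
  change P.real ((fun ω => (X ω, E ω)) ⁻¹' {p : ℝ × ℝ | η * p.1 + p.2 / μ > x}) = _
  rw [hXE.measureReal_preimage_eq_integral hXm hEm hS]
  simp_rw [hslice, hE, expMeasure_real_Ioi hr]

end ExponentialNoise

end ProbabilityTheory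

/-- **Exact convolution identity.** For `η > 0`, `μ > 0`, `x ∈ ℝ`:
`ℙ(ηX + E/μ > x) = ℙ(ηX > x) + (1/2) e^{(μ/2)(μη² - 2x)} (erf((x - μη²)/(√2 η)) + 1)`, and
equivalently `∫_{-∞}^{x/η} ℙ(E/μ > x - ηz) e^{-z²/2}/√(2π) dz` equals the same quantity. -/
theorem convolution_normal_exponential_identity
    {Ω : Type*} [MeasureSpace Ω] [IsProbabilityMeasure (ℙ : Measure Ω)]
    (X E : Ω → ℝ)
    (hX : Measure.map X (ℙ : Measure Ω) = gaussianReal 0 1)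
    (hE : Measure.map E (ℙ : Measure Ω) = expMeasure 1)
    (hXE : IndepFun X E (ℙ : Measure Ω))
    (η μ x : ℝ) (hη : 0 < η) (hμ : 0 < μ) :
    (ℙ {ω | η * X ω + E ω / μ > x}).toReal
        = (ℙ {ω | η * X ω > x}).toReal
          + 1 / 2 * Real.exp (μ / 2 * (μ * η ^ 2 - 2 * x)) *
            (erf ((x - μ * η ^ 2) / (Real.sqrt 2 * η)) + 1) ∧
    (∫ z in Iic (x / η),
        (ℙ {ω | E ω / μ > x - η * z}).toReal * (Real.exp (-z ^ 2 / 2) / Real.sqrt (2 * π)))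
      = 1 / 2 * Real.exp (μ / 2 * (μ * η ^ 2 - 2 * x)) *
          (erf ((x - μ * η ^ 2) / (Real.sqrt 2 * η)) + 1) := by
  have := isProbabilityMeasure_expMeasure (r := 1) one_pos
  have hXm : AEMeasurable X ℙ := aemeasurable_of_map_neZero (by rw [hX]; infer_instance)
  have hEm : AEMeasurable E ℙ := aemeasurable_of_map_neZero (by rw [hE]; infer_instance)
  have hXtail : (ℙ : Measure Ω).real {ω | η * X ω > x} = (gaussianReal 0 1).real (Ioi (x / η)) := by
    have hset : {ω | η * X ω > x} = X ⁻¹' Ioi (x / η) := by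
      ext ω
      simp [div_lt_iff₀ hη, mul_comm]
    rw [hset, ← map_measureReal_apply_of_aemeasurable hXm measurableSet_Ioi, hX]
  constructor
  · rw [← measureReal_def, ← measureReal_def, hXtail,
      hXE.measureReal_mul_add_div_gt hXm hEm hE one_pos hμ, hX]
    simp only [one_mul]
    exact integral_min_one_exp_gaussianReal hη hμ.le x
  · rw [← setIntegral_Iic_min_one_exp_gaussianReal hη hμ.le,
      setIntegral_gaussianReal_eq_setIntegral_mul one_ne_zero _ measurableSet_Iic]
    refine setIntegral_congr_fun measurableSet_Iic fun z _ => ?_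
    rw [← measureReal_def, measureReal_div_gt_of_map_eq_expMeasure hEm hE one_pos hμ, one_mul,
      gaussianPDFReal_zero_one, mul_comm]

end
end

section
/- Exponent comparison with equality exactly at the critical point: for β>0, σ>0, σ_A>0 and all a>0, (2aβ + 2σ² − 2σ√(2aβ+σ²))/σ_A² ≥ (2aβ − σ_A²)/(σ²+σ_A²), with equality if and only if a = a*, where a* = σ_A⁴/(2βσ²) + σ_A²/β. -/
/-!
Write `s = √(2aβ + σ²)` and `S = σ² + σ_A²`. Then the two numerators are `(s - σ)²` and `s² - S`,
and the difference of the two sides is the perfect square `(σ s - S)² / (σ_A² S)`. Hence the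
inequality, with equality exactly when `σ s = S`, i.e. `2aβ + σ² = (S / σ)²`, which solves to `a = a⋆`.
-/

open Real

theorem sq_sub_div_sub_div_eq_sq_div {σ A : ℝ} (hA : A ≠ 0) (hS : σ ^ 2 + A ≠ 0) (s : ℝ) :
    (s - σ) ^ 2 / A - (s ^ 2 - (σ ^ 2 + A)) / (σ ^ 2 + A)
      = (σ * s - (σ ^ 2 + A)) ^ 2 / (A * (σ ^ 2 + A)) := by
  field_simp
  ring

theorem mul_sqrt_eq_iff_eq_div_sq {σ S : ℝ} (hσ : 0 < σ) (hS : 0 < S) (t : ℝ) :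
    σ * √t = S ↔ t = (S / σ) ^ 2 := by
  rw [mul_comm, ← eq_div_iff hσ.ne', sqrt_eq_iff_mul_self_eq_of_pos (by positivity), eq_comm, sq]

theorem add_eq_div_sq_iff {β σ : ℝ} (hβ : β ≠ 0) (hσ : σ ≠ 0) (A a : ℝ) :
    2 * a * β + σ ^ 2 = ((σ ^ 2 + A) / σ) ^ 2 ↔ a = A ^ 2 / (2 * β * σ ^ 2) + A / β := by
  have hcrit : ((σ ^ 2 + A) / σ) ^ 2 = 2 * (A ^ 2 / (2 * β * σ ^ 2) + A / β) * β + σ ^ 2 := by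
    field_simp
    ring
  rw [hcrit, add_left_inj, mul_left_inj' hβ, mul_right_inj' two_ne_zero]

/-- **Exponent comparison with equality exactly at the critical point.** For `β, σ, σ_A > 0`
and all `a > 0`,
`(2aβ + 2σ² - 2σ√(2aβ+σ²))/σ_A² ≥ (2aβ - σ_A²)/(σ² + σ_A²)`,
with equality iff `a = a⋆ = σ_A⁴/(2βσ²) + σ_A²/β`. -/
theorem exponent_comparison (β σ σA : ℝ) (hβ : 0 < β) (hσ : 0 < σ) (hσA : 0 < σA)
    (a : ℝ) (ha : 0 < a) :
    (2 * a * β - σA ^ 2) / (σ ^ 2 + σA ^ 2)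
      ≤ (2 * a * β + 2 * σ ^ 2 - 2 * σ * Real.sqrt (2 * a * β + σ ^ 2)) / σA ^ 2 ∧
    ((2 * a * β + 2 * σ ^ 2 - 2 * σ * Real.sqrt (2 * a * β + σ ^ 2)) / σA ^ 2
        = (2 * a * β - σA ^ 2) / (σ ^ 2 + σA ^ 2)
      ↔ a = σA ^ 4 / (2 * β * σ ^ 2) + σA ^ 2 / β) := by
  have hs : √(2 * a * β + σ ^ 2) ^ 2 = 2 * a * β + σ ^ 2 := sq_sqrt (by positivity)
  have hdiff := sq_sub_div_sub_div_eq_sq_div (σ := σ) (A := σA ^ 2) (by positivity) (by positivity)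
    √(2 * a * β + σ ^ 2)
  rw [show 2 * a * β + 2 * σ ^ 2 - 2 * σ * √(2 * a * β + σ ^ 2)
      = (√(2 * a * β + σ ^ 2) - σ) ^ 2 by linear_combination (-1) * hs,
    show 2 * a * β - σA ^ 2 = √(2 * a * β + σ ^ 2) ^ 2 - (σ ^ 2 + σA ^ 2) by
      linear_combination (-1) * hs]
  refine ⟨sub_nonneg.mp ?_, ?_⟩
  · rw [hdiff]
    positivity
  · rw [← sub_eq_zero, hdiff, div_eq_zero_iff, or_iff_left (by positivity),
      pow_eq_zero_iff two_ne_zero, sub_eq_zero, mul_sqrt_eq_iff_eq_div_sq hσ (by positivity),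
      add_eq_div_sq_iff hβ.ne' hσ.ne', ← pow_mul]
end
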